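/- Let Γ₁ be a finite simple graph on V₁ with Laplacian L₁ and Γ₂ a finite simple graph on V₂ with Laplacian L₂; fix v₁ ∈ V₁ and v₂ ∈ V₂. Let Γ be the one-edge bridge gluing: the simple graph on V₁ ⊕ V₂ with inl a ~ inl a' iff a ~ a' in Γ₁, inr b ~ inr b' iff b ~ b' in Γ₂, and inl a ~ inr b iff a = v₁ and b = v₂. Let L be the Laplacian of Γ. Then, as polynomials in λ over ℝ: det(L − λ·1) = det(L₁ − λ·1)·det(L₂ − λ·1) + det(L₁ − λ·1)·det(L₂⟨v₂⟩ − λ·1) + det(L₁⟨v₁⟩ − λ·1)·det(L₂ − λ·1), where M⟨v⟩ denotes the principal submatrix of M deleting row v and column v. -/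

import Mathlib

/-!
The Laplacian of the glued graph is `diag(L₁, L₂) + w wᵀ`, where `w = e_{v₁} - e_{v₂}` is the
incidence vector of the new edge, and the same holds after subtracting `λ·1`. Adding `w wᵀ`
adds `w` to row `v₁` and subtracts it from row `v₂`; expanding the determinant multilinearly in
these two rows, the term where both rows are replaced vanishes (the rows are `w` and `-w`), and
each term where only one row is replaced stays block triangular, so it factors as a principal
minor of one block times the determinant of the other.
-/

open Polynomial

open scoped Classical

/-- `det (M - λ·1)`, the characteristic determinant of a square real matrix,
as a polynomial in `λ`. -/
noncomputable def charDet {n : Type*} [Fintype n] [DecidableEq n] (M : Matrix n n ℝ) :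
    ℝ[X] :=
  (M.map C - (X : ℝ[X]) • 1).det

/-- The principal submatrix of `M` obtained by deleting the row and column indexed by `v`. -/
def deleteVertex {n : Type*} (M : Matrix n n ℝ) (v : n) :
    Matrix {x : n // x ≠ v} {x : n // x ≠ v} ℝ :=
  M.submatrix Subtype.val Subtype.val

/-- The one-edge bridge gluing of `G₁` and `G₂`: the graph on `V₁ ⊕ V₂` with a single new
edge joining `v₁` to `v₂`. -/
def bridgeGlueOne {V₁ V₂ : Type*} (G₁ : SimpleGraph V₁) (G₂ : SimpleGraph V₂)
    (v₁ : V₁) (v₂ : V₂) : SimpleGraph (V₁ ⊕ V₂) where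
  Adj x y :=
    match x, y with
    | Sum.inl u, Sum.inl v => G₁.Adj u v
    | Sum.inr u, Sum.inr v => G₂.Adj u v
    | Sum.inl u, Sum.inr v => u = v₁ ∧ v = v₂
    | Sum.inr u, Sum.inl v => v = v₁ ∧ u = v₂
  symm := by
    refine ⟨?_⟩
    rintro (u | u) (v | v) h
    · exact G₁.adj_symm h
    · exact h
    · exact h
    · exact G₂.adj_symm h
  loopless := by
    refine ⟨?_⟩
    rintro (u | u) h
    · exact G₁.irrefl h
    · exact G₂.irrefl h

open Matrix

namespace Matrix

variable {m p : Type*} [DecidableEq m] [DecidableEq p]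

theorem updateRow_fromBlocks_inl {α : Type*} (A : Matrix m m α) (B : Matrix m p α)
    (C : Matrix p m α) (D : Matrix p p α) (i : m) (u : m ⊕ p → α) :
    (fromBlocks A B C D).updateRow (Sum.inl i) u =
      fromBlocks (A.updateRow i (u ∘ Sum.inl)) (B.updateRow i (u ∘ Sum.inr)) C D := by
  ext (x | x) (y | y) <;> simp [updateRow_apply]

theorem updateRow_fromBlocks_inr {α : Type*} (A : Matrix m m α) (B : Matrix m p α)
    (C : Matrix p m α) (D : Matrix p p α) (i : p) (u : m ⊕ p → α) :
    (fromBlocks A B C D).updateRow (Sum.inr i) u =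
      fromBlocks A B (C.updateRow i (u ∘ Sum.inl)) (D.updateRow i (u ∘ Sum.inr)) := by
  ext (x | x) (y | y) <;> simp [updateRow_apply]

variable {R : Type*} [CommRing R] [Fintype m] [Fintype p]

theorem det_updateRow_single_self (A : Matrix m m R) (i : m) (c : R) :
    (A.updateRow i (Pi.single i c)).det =
      c * (A.submatrix (Subtype.val : {x // x ≠ i} → m) Subtype.val).det := by
  let e := Equiv.sumCompl (· = i)
  have : Unique {x // x = i} := ⟨⟨⟨i, rfl⟩⟩, fun a => Subtype.ext a.2⟩
  have hblocks : (A.updateRow i (Pi.single i c)).submatrix e e =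
      fromBlocks (of fun _ _ => c) 0 (of fun (x : {x // x ≠ i}) _ => A x i)
        (A.submatrix Subtype.val Subtype.val) := by
    ext (⟨x, hx⟩ | ⟨x, hx⟩) (⟨y, hy⟩ | ⟨y, hy⟩) <;>
      simp_all [e, updateRow_apply]
  rw [← det_submatrix_equiv_self e, hblocks, det_fromBlocks_zero₁₂, det_unique]
  rfl

theorem det_add_vecMulVec_single_sub_single (D : Matrix m m R) {a b : m} (hab : a ≠ b)
    (w : m → R) :
    (D + vecMulVec (Pi.single a 1 - Pi.single b 1) w).det =
      D.det + (D.updateRow a w).det - (D.updateRow b w).det := by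
  have hrows : D + vecMulVec (Pi.single a 1 - Pi.single b 1) w =
      (D.updateRow a (D a + w)).updateRow b (D b + -w) := by
    ext i j
    rcases eq_or_ne i b with rfl | hib
    · simp [vecMulVec_apply, hab, sub_eq_add_neg]
    rcases eq_or_ne i a with rfl | hia
    · simp [vecMulVec_apply, hab]
    simp [vecMulVec_apply, hia, hib]
  have h_keep : ∀ {i j : m} (x : m → R), i ≠ j →
      (D.updateRow i x).updateRow j (D j) = D.updateRow i x := by
    intro i j x hij
    have := updateRow_eq_self (D.updateRow i x) j
    rwa [updateRow_ne hij.symm] at this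
  have h_add : (D.updateRow a (D a + w)).det = D.det + (D.updateRow a w).det := by
    rw [det_updateRow_add, updateRow_eq_self]
  have h_neg : (D.updateRow b (-w)).det = -(D.updateRow b w).det := by
    rw [← neg_one_smul R w, det_updateRow_smul, neg_one_mul]
  have h_cancel : ((D.updateRow b (-w)).updateRow a w).det = 0 := by
    rw [← det_updateRow_add_self _ hab]
    exact det_eq_zero_of_row_eq_zero a (by simp [updateRow_ne hab.symm])
  rw [hrows, det_updateRow_add, h_keep _ hab, h_add, updateRow_comm _ hab, det_updateRow_add,
    h_keep _ hab.symm, h_neg, h_cancel]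
  ring

theorem det_fromBlocks_add_vecMulVec_inl_sub_inr (A : Matrix m m R) (B : Matrix p p R)
    (i : m) (j : p) :
    (fromBlocks A 0 0 B + vecMulVec (Pi.single (Sum.inl i) 1 - Pi.single (Sum.inr j) 1)
        (Pi.single (Sum.inl i) 1 - Pi.single (Sum.inr j) 1)).det =
      A.det * B.det + A.det * (B.submatrix (Subtype.val : {x // x ≠ j} → p) Subtype.val).det +
        (A.submatrix (Subtype.val : {x // x ≠ i} → m) Subtype.val).det * B.det := by
  set w : m ⊕ p → R := Pi.single (Sum.inl i) 1 - Pi.single (Sum.inr j) 1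
  have hw_inl : w ∘ Sum.inl = Pi.single i 1 := by
    ext x; by_cases hx : x = i <;> simp [w, hx]
  have hw_inr : w ∘ Sum.inr = Pi.single j (-1) := by
    ext x; by_cases hx : x = j <;> simp [w, hx]
  rw [det_add_vecMulVec_single_sub_single _ Sum.inl_ne_inr, updateRow_fromBlocks_inl,
    updateRow_fromBlocks_inr, det_fromBlocks_zero₂₁, det_fromBlocks_zero₂₁, det_fromBlocks_zero₁₂,
    hw_inl, hw_inr, det_updateRow_single_self, det_updateRow_single_self]
  ring

end Matrix

namespace SimpleGraph

variable {V₁ V₂ : Type*} [DecidableEq V₁] [DecidableEq V₂]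
  (G₁ : SimpleGraph V₁) (G₂ : SimpleGraph V₂) [DecidableRel G₁.Adj] [DecidableRel G₂.Adj]
  (v₁ : V₁) (v₂ : V₂) [DecidableRel (bridgeGlueOne G₁ G₂ v₁ v₂).Adj]

theorem adjMatrix_bridgeGlueOne (R : Type*) [Zero R] [One R] :
    (bridgeGlueOne G₁ G₂ v₁ v₂).adjMatrix R =
      fromBlocks (G₁.adjMatrix R) (single v₁ v₂ 1) (single v₂ v₁ 1) (G₂.adjMatrix R) := by
  ext (a | a) (b | b) <;>
    simp [adjMatrix_apply, bridgeGlueOne, single_apply, and_comm, eq_comm]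

variable [Fintype V₁] [Fintype V₂]

theorem degree_bridgeGlueOne_inl (a : V₁) :
    (bridgeGlueOne G₁ G₂ v₁ v₂).degree (Sum.inl a) = G₁.degree a + if a = v₁ then 1 else 0 := by
  have h := adjMatrix_mulVec_const_apply (G := bridgeGlueOne G₁ G₂ v₁ v₂) (a := 1) (v := Sum.inl a)
  rw [adjMatrix_bridgeGlueOne, fromBlocks_mulVec] at h
  simpa [Function.comp_def, single_mulVec, Function.update_apply, eq_comm] using h.symm

theorem degree_bridgeGlueOne_inr (b : V₂) :
    (bridgeGlueOne G₁ G₂ v₁ v₂).degree (Sum.inr b) = G₂.degree b + if b = v₂ then 1 else 0 := by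
  have h := adjMatrix_mulVec_const_apply (G := bridgeGlueOne G₁ G₂ v₁ v₂) (a := 1) (v := Sum.inr b)
  rw [adjMatrix_bridgeGlueOne, fromBlocks_mulVec] at h
  simpa [Function.comp_def, single_mulVec, Function.update_apply, eq_comm, add_comm] using h.symm

theorem lapMatrix_bridgeGlueOne (R : Type*) [Ring R] :
    (bridgeGlueOne G₁ G₂ v₁ v₂).lapMatrix R =
      fromBlocks (G₁.lapMatrix R) 0 0 (G₂.lapMatrix R) +
        vecMulVec (Pi.single (Sum.inl v₁) 1 - Pi.single (Sum.inr v₂) 1)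
          (Pi.single (Sum.inl v₁) 1 - Pi.single (Sum.inr v₂) 1) := by
  ext (a | a) (b | b) <;>
    simp [lapMatrix, degMatrix, adjMatrix_bridgeGlueOne, degree_bridgeGlueOne_inl,
      degree_bridgeGlueOne_inr, diagonal_apply, vecMulVec_apply, Pi.single_apply, single_apply]
  all_goals split_ifs <;> simp_all

end SimpleGraph

section CharDet

variable {m p : Type*} [Fintype m] [Fintype p] [DecidableEq m] [DecidableEq p]

theorem charDet_deleteVertex (M : Matrix m m ℝ) (v : m) :
    charDet (deleteVertex M v) =
      ((M.map C - (X : ℝ[X]) • 1).submatrix (Subtype.val : {x // x ≠ v} → m) Subtype.val).det := by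
  unfold charDet deleteVertex
  congr 1
  ext a b
  simp [one_apply, Subtype.ext_iff]

theorem charDet_fromBlocks_add_vecMulVec_inl_sub_inr (A : Matrix m m ℝ) (B : Matrix p p ℝ)
    (i : m) (j : p) :
    charDet (fromBlocks A 0 0 B + vecMulVec (Pi.single (Sum.inl i) 1 - Pi.single (Sum.inr j) 1)
        (Pi.single (Sum.inl i) 1 - Pi.single (Sum.inr j) 1)) =
      charDet A * charDet B + charDet A * charDet (deleteVertex B j) +
        charDet (deleteVertex A i) * charDet B := by
  have hmat : (fromBlocks A 0 0 B +
        vecMulVec (Pi.single (Sum.inl i) 1 - Pi.single (Sum.inr j) 1 : m ⊕ p → ℝ)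
        (Pi.single (Sum.inl i) 1 - Pi.single (Sum.inr j) 1)).map C - (X : ℝ[X]) • 1 =
      fromBlocks (A.map C - (X : ℝ[X]) • 1) 0 0 (B.map C - (X : ℝ[X]) • 1) +
        vecMulVec (Pi.single (Sum.inl i) 1 - Pi.single (Sum.inr j) 1 : m ⊕ p → ℝ[X])
          (Pi.single (Sum.inl i) 1 - Pi.single (Sum.inr j) 1) := by
    ext (a | a) (b | b) : 2 <;>
      simp [vecMulVec_apply, Pi.single_apply, one_apply, apply_ite C] <;> abel
  rw [charDet, hmat, det_fromBlocks_add_vecMulVec_inl_sub_inr, charDet_deleteVertex,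
    charDet_deleteVertex]
  rfl

end CharDet

theorem charDet_bridgeGlueOne {V₁ V₂ : Type*} [Fintype V₁] [Fintype V₂]
    [DecidableEq V₁] [DecidableEq V₂]
    (G₁ : SimpleGraph V₁) (G₂ : SimpleGraph V₂)
    [DecidableRel G₁.Adj] [DecidableRel G₂.Adj]
    (v₁ : V₁) (v₂ : V₂) :
    charDet ((bridgeGlueOne G₁ G₂ v₁ v₂).lapMatrix ℝ) =
      charDet (G₁.lapMatrix ℝ) * charDet (G₂.lapMatrix ℝ) +
      charDet (G₁.lapMatrix ℝ) * charDet (deleteVertex (G₂.lapMatrix ℝ) v₂) +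
      charDet (deleteVertex (G₁.lapMatrix ℝ) v₁) * charDet (G₂.lapMatrix ℝ) := by
  rw [SimpleGraph.lapMatrix_bridgeGlueOne, charDet_fromBlocks_add_vecMulVec_inl_sub_inr]
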